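/- Let G be a finite simple bipartite graph with bipartition (A, D) that admits at least one matching D-cover with centers in A, let S be a nonempty subset of A, and let D' = { d ∈ D : N_G(d) ⊆ S }. Then md(G) ≥ ⌈ |D'| / |S| ⌉. -/

import Mathlib

variable {V : Type*}

/-- The set of vertices covered by a set of edges. -/
def edgeCover (M : Finset (Sym2 V)) : Set V := {v | ∃ e ∈ M, v ∈ e}

/-- `M` is a matching of `G`: a set of pairwise disjoint edges of `G`. -/
def IsMatchingSet (G : SimpleGraph V) (M : Finset (Sym2 V)) : Prop :=
  (∀ e ∈ M, e ∈ G.edgeSet) ∧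
    ∀ e ∈ M, ∀ f ∈ M, e ≠ f → ∀ v : V, v ∈ e → v ∉ f

/-- `M` is a maximum matching of `G`. -/
def IsMaximumMatchingSet (G : SimpleGraph V) (M : Finset (Sym2 V)) : Prop :=
  IsMatchingSet G M ∧ ∀ N : Finset (Sym2 V), IsMatchingSet G N → N.card ≤ M.card

variable [Fintype V] [DecidableEq V]

/-- `M` is a `k`-matching cover of `G`: a union of `k` matchings of `G` covering `V(G)`. -/
def IsKMatchingCover (G : SimpleGraph V) (k : ℕ) (M : Finset (Sym2 V)) : Prop :=
  (∃ f : Fin k → Finset (Sym2 V), (∀ i, IsMatchingSet G (f i)) ∧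
      M = Finset.univ.biUnion f) ∧
    ∀ v : V, v ∈ edgeCover M

/-- The matching cover number `mc(G)`. -/
noncomputable def mc (G : SimpleGraph V) : ℕ :=
  sInf {k | ∃ M : Finset (Sym2 V), IsKMatchingCover G k M}

/-- `M` is a `k`-matching `D`-cover of `G`: a union of `k` matchings of `G` covering `D`. -/
def IsKMatchingDCover (G : SimpleGraph V) (D : Set V) (k : ℕ)
    (M : Finset (Sym2 V)) : Prop :=
  (∃ f : Fin k → Finset (Sym2 V), (∀ i, IsMatchingSet G (f i)) ∧
      M = Finset.univ.biUnion f) ∧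
    ∀ v ∈ D, v ∈ edgeCover M

/-- The matching `D`-cover number `md(G)`. -/
noncomputable def md (G : SimpleGraph V) (D : Set V) : ℕ :=
  sInf {k | ∃ M : Finset (Sym2 V), IsKMatchingDCover G D k M}

/-- The Gallai–Edmonds set `D(G)`: vertices missed by some maximum matching. -/
def Dset (G : SimpleGraph V) : Set V :=
  {v | ∃ M : Finset (Sym2 V), IsMaximumMatchingSet G M ∧ v ∉ edgeCover M}

/-- The Gallai–Edmonds set `A(G) = N_G(D(G))`. -/
def Aset (G : SimpleGraph V) : Set V :=
  {v | v ∉ Dset G ∧ ∃ u ∈ Dset G, G.Adj u v}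

/-- The Gallai–Edmonds set `C(G) = V(G) \ (A(G) ∪ D(G))`. -/
def Cset (G : SimpleGraph V) : Set V :=
  {v | v ∉ Dset G ∧ v ∉ Aset G}

/-- The induced subgraph `G[s]`, viewed as a graph on the same vertex type. -/
def indOn (G : SimpleGraph V) (s : Set V) : SimpleGraph V where
  Adj a b := a ∈ s ∧ b ∈ s ∧ G.Adj a b
  symm := by constructor; rintro a b ⟨ha, hb, h⟩; exact ⟨hb, ha, h.symm⟩
  loopless := by constructor; rintro a ⟨-, -, h⟩; exact G.ne_of_adj h rfl

/-- `D*`: the set of isolated vertices of `G[D(G)]`. -/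
def DstarSet (G : SimpleGraph V) : Set V :=
  {v | v ∈ Dset G ∧ ∀ u : V, ¬ (indOn G (Dset G)).Adj v u}

/-- The bipartite graph `G*`, obtained from `G` by deleting the nontrivial components of
`G[D(G)]`, the vertices of `C(G)`, and the edges spanned by `A(G)`: its edges are exactly
the edges of `G` joining `A(G)` and `D*`. -/
def Gstar (G : SimpleGraph V) : SimpleGraph V where
  Adj a b := G.Adj a b ∧
    ((a ∈ Aset G ∧ b ∈ DstarSet G) ∨ (a ∈ DstarSet G ∧ b ∈ Aset G))
  symm := by constructor; rintro a b ⟨h, hc⟩; exact ⟨h.symm, by tauto⟩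
  loopless := by constructor; rintro a ⟨h, -⟩; exact G.ne_of_adj h rfl

open Classical in
/-- The degree of `v` in the edge set `M`; this is the degree of `v` in `G[M]+A`
(vertices not covered by `M` have degree `0`). -/
noncomputable def degM (M : Finset (Sym2 V)) (v : V) : ℕ :=
  (M.filter fun e => v ∈ e).card

/-- The maximum degree `Δ(G[M]+A)`. -/
noncomputable def maxDegPlus (M : Finset (Sym2 V)) : ℕ :=
  Finset.univ.sup fun v : V => degM M v

/-- `w` is a maximum center of `M` (all vertices of `A` being regarded as centers). -/
def IsMaximumCenter (A : Set V) (M : Finset (Sym2 V)) (w : V) : Prop :=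
  w ∈ A ∧ degM M w = maxDegPlus M

/-- `(A, D)` is a bipartition of `G`. -/
def IsBipartition (G : SimpleGraph V) (A D : Set V) : Prop :=
  Disjoint A D ∧ A ∪ D = Set.univ ∧
    ∀ a b : V, G.Adj a b → (a ∈ A ∧ b ∈ D) ∨ (a ∈ D ∧ b ∈ A)

/-- A matching `D`-cover of `G`, recorded as an edge set
(a union of matchings of `G` covering `D`). -/
def IsMDCoverSet (G : SimpleGraph V) (D : Set V) (M : Finset (Sym2 V)) : Prop :=
  ∃ k, IsKMatchingDCover G D k M

/-- A minimal matching `D`-cover: no proper subset is a matching `D`-cover. -/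
def IsMinimalMDCover (G : SimpleGraph V) (D : Set V) (M : Finset (Sym2 V)) : Prop :=
  IsMDCoverSet G D M ∧ ∀ M' ⊂ M, ¬ IsMDCoverSet G D M'

/-- The graph `G[M]` spanned by an edge set, on the same vertex type. -/
def fromEdges (M : Finset (Sym2 V)) : SimpleGraph V where
  Adj a b := a ≠ b ∧ s(a, b) ∈ M
  symm := by constructor; rintro a b ⟨hne, h⟩; exact ⟨hne.symm, by rwa [Sym2.eq_swap]⟩
  loopless := by constructor; rintro a ⟨hne, -⟩; exact hne rfl

/-- The connected component of `v` in `G[M]` is a star with center `c`: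
every vertex of the component is `c` or a neighbour of `c`, and every edge of the
component is incident with `c`. -/
def StarCenteredAt (M : Finset (Sym2 V)) (c v : V) : Prop :=
  (fromEdges M).Reachable c v ∧
    (∀ u : V, (fromEdges M).Reachable u v → u = c ∨ (fromEdges M).Adj c u) ∧
    ∀ e ∈ M, (∃ x, x ∈ e ∧ (fromEdges M).Reachable x v) → c ∈ e

/-- Every component of `G[M]` is a star whose center lies in `A`. -/
def CentersInA (A : Set V) (M : Finset (Sym2 V)) : Prop :=
  ∀ v ∈ edgeCover M, ∃ c ∈ A, StarCenteredAt M c v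

/-- `w` is an `M`-switching path: an `M`-alternating path (starting at a maximum center
with an edge of `M`, vertices alternately centers in `A` and ends, edges alternately in
`M` and outside `M`) ending at a center `v` with `d(u) ≥ d(v) + 2`. -/
def IsSwitchingPath (G : SimpleGraph V) (A : Set V) (M : Finset (Sym2 V))
    (n : ℕ) (w : Fin (n + 1) → V) : Prop :=
  0 < n ∧ Function.Injective w ∧
    (∀ i : Fin n, G.Adj (w i.castSucc) (w i.succ)) ∧
    (∀ i : Fin n, (s(w i.castSucc, w i.succ) ∈ M ↔ Even (i : ℕ))) ∧
    (∀ i : Fin (n + 1), w i ∈ A ↔ Even (i : ℕ)) ∧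
    w (Fin.last n) ∈ A ∧
    IsMaximumCenter A M (w 0) ∧
    degM M (w (Fin.last n)) + 2 ≤ degM M (w 0)

/-- There is an `M`-switching path from `u` to `v` in `G`. -/
def ExistsSwitchingPath (G : SimpleGraph V) (A : Set V) (M : Finset (Sym2 V))
    (u v : V) : Prop :=
  ∃ (n : ℕ) (w : Fin (n + 1) → V),
    IsSwitchingPath G A M n w ∧ w 0 = u ∧ w (Fin.last n) = v

/-- The edge set of the path `w 0, w 1, …, w n`. -/
def pathEdges (n : ℕ) (w : Fin (n + 1) → V) : Finset (Sym2 V) :=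
  Finset.univ.image fun i : Fin n => s(w i.castSucc, w i.succ)

/-- if a bipartite graph `G` with bipartition `(A, D)` has a matching
`D`-cover with centers in `A`, `S ⊆ A` is nonempty and `D' = {d ∈ D : N_G(d) ⊆ S}`, then
`md(G) ≥ ⌈|D'| / |S|⌉`. -/
theorem md_lower_bound (G : SimpleGraph V) (A D : Set V)
    (hbip : IsBipartition G A D)
    (hex : ∃ M : Finset (Sym2 V), IsMDCoverSet G D M ∧ CentersInA A M)
    (S : Set V) (hS : S ⊆ A) (hSne : S.Nonempty) :
    (⌈(({d | d ∈ D ∧ ∀ x : V, G.Adj d x → x ∈ S}.ncard : ℚ) / (S.ncard : ℚ))⌉ : ℤ) ≤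
      (md G D : ℤ) := by
  classical
  obtain ⟨hdisj, -, hadj⟩ := hbip
  have hne : {k | ∃ M : Finset (Sym2 V), IsKMatchingDCover G D k M}.Nonempty := by
    obtain ⟨M, ⟨k, hk⟩, -⟩ := hex
    exact ⟨k, M, hk⟩
  obtain ⟨M, hM⟩ : ∃ M, IsKMatchingDCover G D (md G D) M := Nat.sInf_mem hne
  obtain ⟨⟨f, hfmatch, hMeq⟩, hcov⟩ := hM
  set D' : Set V := {d | d ∈ D ∧ ∀ x : V, G.Adj d x → x ∈ S} with hD'
  set P : Sym2 V → Prop := fun e => ∃ s_ ∈ S, s_ ∈ e with hP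
  set E : Finset (Sym2 V) := M.filter P with hE
  have hedgeG : ∀ e ∈ M, e ∈ G.edgeSet := by
    intro e he
    rw [hMeq] at he
    simp only [Finset.mem_biUnion] at he
    obtain ⟨i, -, hi⟩ := he
    exact (hfmatch i).1 e hi
  have hgex : ∀ d ∈ D', ∃ e ∈ M, d ∈ e := fun d hd => hcov d hd.1
  -- the other endpoint of an edge through d ∈ D' lies in S
  have hother : ∀ d ∈ D', ∀ e ∈ M, ∀ (hde : d ∈ e),
      (Sym2.Mem.other' hde) ∈ S ∧ (Sym2.Mem.other' hde) ∈ e := by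
    intro d hd e heM hde
    have hspec := Sym2.other_spec' hde
    have hadj' : G.Adj d (Sym2.Mem.other' hde) := by
      rw [← SimpleGraph.mem_edgeSet, hspec]
      exact hedgeG e heM
    exact ⟨hd.2 _ hadj', Sym2.other_mem' hde⟩
  have hA : D'.toFinset.card ≤ E.card := by
    apply Finset.card_le_card_of_injOn
      (fun d => if h : ∃ e ∈ M, d ∈ e then h.choose else s(d, d))
    · intro d hd
      rw [Finset.mem_coe, Set.mem_toFinset] at hd
      have h := hgex d hd
      simp only [dif_pos h]
      obtain ⟨heM, hde⟩ := h.choose_spec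
      refine Finset.mem_filter.mpr ⟨heM, ?_⟩
      obtain ⟨hxS, hxe⟩ := hother d hd _ heM hde
      exact ⟨_, hxS, hxe⟩
    · intro d1 hd1 d2 hd2 heq
      simp only [Finset.mem_coe, Set.mem_toFinset] at hd1 hd2
      have h1 := hgex d1 hd1
      have h2 := hgex d2 hd2
      simp only [dif_pos h1, dif_pos h2] at heq
      obtain ⟨h1M, h1e⟩ := h1.choose_spec
      obtain ⟨h2M, h2e⟩ := h2.choose_spec
      by_contra hne12
      -- d2 is in the edge h1.choose
      have hd2e : d2 ∈ h1.choose := heq ▸ h2e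
      have hspec := Sym2.other_spec' h1e
      have hd2m : d2 ∈ s(d1, Sym2.Mem.other' h1e) := by rw [hspec]; exact hd2e
      have hd2' : d2 = d1 ∨ d2 = Sym2.Mem.other' h1e := Sym2.mem_iff.mp hd2m
      rcases hd2' with h | h
      · exact hne12 h.symm
      · -- then G.Adj d1 d2 with both in D, contradiction with bipartition
        have hadj' : G.Adj d1 d2 := by
          rw [h, ← SimpleGraph.mem_edgeSet, hspec]
          exact hedgeG _ h1M
        rcases hadj d1 d2 hadj' with ⟨ha, -⟩ | ⟨-, ha⟩
        · exact (Set.disjoint_left.mp hdisj ha) hd1.1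
        · exact (Set.disjoint_left.mp hdisj ha) hd2.1
  have hB : E.card ≤ md G D * S.toFinset.card := by
    have hsub : E ⊆ Finset.univ.biUnion (fun i => (f i).filter P) := by
      rw [hE, hMeq, Finset.filter_biUnion]
    calc E.card ≤ (Finset.univ.biUnion (fun i => (f i).filter P)).card :=
            Finset.card_le_card hsub
      _ ≤ ∑ i, ((f i).filter P).card := Finset.card_biUnion_le
      _ ≤ ∑ _i : Fin (md G D), S.toFinset.card := by
          refine Finset.sum_le_sum fun i _ => ?_
          apply Finset.card_le_card_of_injOn
            (fun e => if h : ∃ s_ ∈ S, s_ ∈ e then h.choose else hSne.choose)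
          · intro e he
            have hPe : P e := (Finset.mem_filter.mp he).2
            simp only [dif_pos hPe]
            simp only [Finset.mem_coe, Set.mem_toFinset, dif_pos (show ∃ s_ ∈ S, s_ ∈ e from hPe)]
            exact hPe.choose_spec.1
          · intro e1 he1 e2 he2 heq
            have hP1 : P e1 := (Finset.mem_filter.mp he1).2
            have hP2 : P e2 := (Finset.mem_filter.mp he2).2
            simp only [dif_pos (show ∃ s_ ∈ S, s_ ∈ e1 from hP1), dif_pos (show ∃ s_ ∈ S, s_ ∈ e2 from hP2)] at heq
            by_contra hne'
            exact (hfmatch i).2 e1 (Finset.mem_filter.mp he1).1 e2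
              (Finset.mem_filter.mp he2).1 hne' _ hP1.choose_spec.2
              (heq ▸ hP2.choose_spec.2)
      _ = md G D * S.toFinset.card := by simp [Finset.sum_const, mul_comm]
  have hmain : D'.ncard ≤ md G D * S.ncard := by
    rw [Set.ncard_eq_toFinset_card' D', Set.ncard_eq_toFinset_card' S]
    exact le_trans hA hB
  have hSpos : 0 < (S.ncard : ℚ) := by
    have : 0 < S.ncard := (Set.ncard_pos (Set.toFinite S)).mpr hSne
    exact_mod_cast this
  rw [Int.ceil_le]
  rw [div_le_iff₀ hSpos]
  push_cast
  calc (D'.ncard : ℚ) ≤ ((md G D * S.ncard : ℕ) : ℚ) := by exact_mod_cast hmain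
    _ = (md G D : ℚ) * S.ncard := by push_cast; ring
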